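/- Let P be a finite poset and k a field of characteristic 0. For every n ≥ 1 the map Φ : C^n(P;k) → C^n(kP,S;kP) is a well-defined k-linear bijection from simplicial n-cochains on P onto S-relative Hochschild n-cochains of the incidence algebra kP; for n = 0, the map f ↦ Φf (the diagonal element with (Φf)(i,i) = f(i)) is a k-linear bijection from C^0(P;k) onto the centralizer {a ∈ kP | a·b = b·a for all b ∈ S}. -/

import Mathlib

/-!
On the tuple of matrix units `(E^{c₀c₁}, …, E^{cₙ₋₁cₙ})` along a chain `c`, the cochain `Φ f` has
`(c₀, cₙ)`-entry `f c`; this gives injectivity. Conversely, since `P` is finite, multilinearity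
determines a relative cochain `F` by its values on tuples of matrix units. Such a value vanishes
unless the tuple is composable (move the idempotent `E^{jj}` across the mismatched junction), and
along a chain `c` it is concentrated in the `(c₀, cₙ)`-entry (absorb `E^{c₀c₀}` on the left and
`E^{cₙcₙ}` on the right). So `F = Φ f`, where `f c` is that entry. In degree `0`, an element
commuting with every `E^{jj}` is diagonal.
-/

open Finset

section Hochschild
variable (k : Type*) [Field k] {A : Type*} [Ring A] [Algebra k A]

/-- `f : A^n → A` is `k`-multilinear. -/
def IsMultilin (n : ℕ) (f : (Fin n → A) → A) : Prop :=
  ∀ (a : Fin n → A) (i : Fin n) (c : k) (x y : A),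
    f (Function.update a i (c • x + y)) =
      c • f (Function.update a i x) + f (Function.update a i y)

/-- `f : A^n → A` is an `S`-relative Hochschild `n`-cochain. -/
def IsRelCochain (S : Set A) (n : ℕ) (f : (Fin n → A) → A) : Prop :=
  IsMultilin k n f ∧
  ∀ b ∈ S, ∀ a : Fin n → A,
    (∀ h0 : 0 < n, f (Function.update a ⟨0, h0⟩ (b * a ⟨0, h0⟩)) = b * f a) ∧
    (∀ (t : ℕ) (ht : t + 1 < n),
      f (Function.update a ⟨t, by omega⟩ (a ⟨t, by omega⟩ * b)) =
        f (Function.update a ⟨t + 1, ht⟩ (b * a ⟨t + 1, ht⟩))) ∧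
    (∀ h0 : 0 < n, f (Function.update a ⟨n - 1, by omega⟩ (a ⟨n - 1, by omega⟩ * b)) = f a * b)

end Hochschild

section Incidence
variable (k : Type*) [Field k] (P : Type*) [PartialOrder P] [LocallyFiniteOrder P]
  [DecidableEq P]

/-- A chain (simplex) of length `n` in the poset `P`: a monotone `(n+1)`-tuple. -/
abbrev SChain (n : ℕ) := {c : Fin (n + 1) → P // Monotone c}

open scoped Classical in
/-- The finset of monotone `(n+1)`-tuples from `x` to `y`. -/
noncomputable def chainTuples (n : ℕ) (x y : P) : Finset (Fin (n + 1) → P) :=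
  (Fintype.piFinset fun _ => Finset.Icc x y).filter fun c =>
    Monotone c ∧ c 0 = x ∧ c (Fin.last n) = y

lemma chainTuples_mono {n : ℕ} {x y : P} {c : Fin (n + 1) → P}
    (hc : c ∈ chainTuples P n x y) : Monotone c := by
  classical
  simp only [chainTuples, Finset.mem_filter] at hc
  exact hc.2.1

lemma le_of_mem_chainTuples {n : ℕ} {x y : P} {c : Fin (n + 1) → P}
    (hc : c ∈ chainTuples P n x y) : x ≤ y := by
  classical
  simp only [chainTuples, Finset.mem_filter] at hc
  exact hc.2.2.1 ▸ hc.2.2.2 ▸ hc.2.1 (Fin.zero_le _)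

/-- The map `Φ` from simplicial `n`-cochains on `P` to Hochschild `n`-cochains of `kP`:
`(Φf)(a_1, …, a_n)(x, y) = ∑_{x = i₀ ≤ ⋯ ≤ iₙ = y} f(i₀, …, iₙ)·a_1(i₀,i₁)⋯aₙ(i_{n-1},iₙ)`. -/
noncomputable def Phi (n : ℕ) (f : SChain P n → k) (a : Fin n → IncidenceAlgebra k P) :
    IncidenceAlgebra k P :=
  ⟨fun x y => ∑ c ∈ (chainTuples P n x y).attach,
      f ⟨c.1, chainTuples_mono P c.2⟩ * ∏ t : Fin n, a t (c.1 t.castSucc) (c.1 t.succ),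
   fun x y hxy => by
    try dsimp only
    exact Finset.sum_eq_zero fun c _ => absurd (le_of_mem_chainTuples P c.2) hxy⟩

/-- The subalgebra `S ⊆ kP` of elements supported on the diagonal. -/
def diagSub : Subalgebra k (IncidenceAlgebra k P) where
  carrier := {a | ∀ i j : P, i ≠ j → a i j = 0}
  add_mem' := fun {a} {b} ha hb i j hij => by
    rw [IncidenceAlgebra.add_apply, ha i j hij, hb i j hij, add_zero]
  mul_mem' := fun {a} {b} ha hb i j hij => by
    rw [IncidenceAlgebra.mul_apply]
    refine Finset.sum_eq_zero fun m _ => ?_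
    rcases eq_or_ne i m with rfl | him
    · rw [hb _ _ hij, mul_zero]
    · rw [ha _ _ him, zero_mul]
  algebraMap_mem' := fun c i j hij => by
    rw [Algebra.algebraMap_eq_smul_one]
    show c • ((1 : IncidenceAlgebra k P) i j) = 0
    rw [IncidenceAlgebra.one_apply, if_neg hij, smul_zero]

end Incidence

open IncidenceAlgebra Function

namespace IncidenceAlgebra

variable {𝕜 α : Type*}

lemma sum_apply [AddCommMonoid 𝕜] [LE α] {ι : Type*} (s : Finset ι)
    (g : ι → IncidenceAlgebra 𝕜 α) (x y : α) : (∑ i ∈ s, g i) x y = ∑ i ∈ s, g i x y :=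
  map_sum (⟨⟨fun a => a x y, rfl⟩, fun _ _ => rfl⟩ : IncidenceAlgebra 𝕜 α →+ 𝕜) g s

section Diagonal

variable [Preorder α] [LocallyFiniteOrder α]

section

variable [Semiring 𝕜] {b : IncidenceAlgebra 𝕜 α}

lemma diag_mul_apply (hb : ∀ i j, i ≠ j → b i j = 0) (a : IncidenceAlgebra 𝕜 α) (x y : α) :
    (b * a) x y = b x x * a x y := by
  by_cases hxy : x ≤ y
  · rw [mul_apply, sum_eq_single_of_mem x (mem_Icc.2 ⟨le_rfl, hxy⟩)]
    exact fun m _ hm => by rw [hb x m hm.symm, zero_mul]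
  · rw [apply_eq_zero_of_not_le hxy, apply_eq_zero_of_not_le hxy, mul_zero]

lemma mul_diag_apply (hb : ∀ i j, i ≠ j → b i j = 0) (a : IncidenceAlgebra 𝕜 α) (x y : α) :
    (a * b) x y = a x y * b y y := by
  by_cases hxy : x ≤ y
  · rw [mul_apply, sum_eq_single_of_mem y (mem_Icc.2 ⟨hxy, le_rfl⟩)]
    exact fun m _ hm => by rw [hb m y hm, mul_zero]
  · rw [apply_eq_zero_of_not_le hxy, apply_eq_zero_of_not_le hxy, zero_mul]

end

lemma mul_comm_of_diag [CommSemiring 𝕜] {a b : IncidenceAlgebra 𝕜 α}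
    (ha : ∀ i j, i ≠ j → a i j = 0) (hb : ∀ i j, i ≠ j → b i j = 0) : a * b = b * a := by
  ext x y _
  rw [mul_diag_apply hb, diag_mul_apply hb]
  obtain rfl | hxy := eq_or_ne x y
  · exact mul_comm _ _
  · rw [ha x y hxy, zero_mul, mul_zero]

end Diagonal

section Single

variable (𝕜) [Semiring 𝕜] [Preorder α] [DecidableEq α]

open scoped Classical in
/-- The matrix unit `E^{ij}`; it is `0` unless `i ≤ j`. -/
noncomputable def single (i j : α) : IncidenceAlgebra 𝕜 α :=
  ⟨fun x y => if x = i ∧ y = j ∧ i ≤ j then 1 else 0,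
    fun _ _ hxy => if_neg fun ⟨hx, hy, hij⟩ => hxy (hx ▸ hy ▸ hij)⟩

open scoped Classical in
lemma single_apply (i j x y : α) :
    single 𝕜 i j x y = if x = i ∧ y = j ∧ i ≤ j then 1 else 0 := rfl

variable {𝕜}

lemma single_apply_of_ne_left {i j x : α} (y : α) (hx : x ≠ i) : single 𝕜 i j x y = 0 :=
  if_neg fun h => hx h.1

lemma single_apply_of_ne_right {i j y : α} (x : α) (hy : y ≠ j) : single 𝕜 i j x y = 0 :=
  if_neg fun h => hy h.2.1

lemma single_apply_self {i j : α} (hij : i ≤ j) : single 𝕜 i j i j = 1 :=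
  if_pos ⟨rfl, rfl, hij⟩

lemma single_eq_zero_of_not_le {i j : α} (h : ¬i ≤ j) : single 𝕜 i j = 0 := by
  ext x y _
  exact if_neg fun hx => h hx.2.2

lemma single_self_apply_of_ne (i : α) {x y : α} (hxy : x ≠ y) : single 𝕜 i i x y = 0 := by
  obtain rfl | hx := eq_or_ne x i
  · exact single_apply_of_ne_right _ hxy.symm
  · exact single_apply_of_ne_left _ hx

variable [LocallyFiniteOrder α]

lemma single_self_mul_single (i j l : α) :
    single 𝕜 i i * single 𝕜 j l = if i = j then single 𝕜 j l else 0 := by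
  ext x y _
  rw [diag_mul_apply (fun _ _ => single_self_apply_of_ne i)]
  obtain rfl | hx := eq_or_ne x i
  · rw [single_apply_self le_rfl, one_mul]
    split_ifs with hxj
    · rfl
    · exact single_apply_of_ne_left _ hxj
  · rw [single_apply_of_ne_left _ hx, zero_mul]
    split_ifs with hij
    · exact (single_apply_of_ne_left _ (hij ▸ hx)).symm
    · rfl

lemma single_mul_single_self (i j l : α) :
    single 𝕜 i j * single 𝕜 l l = if j = l then single 𝕜 i j else 0 := by
  ext x y _
  rw [mul_diag_apply (fun _ _ => single_self_apply_of_ne l)]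
  obtain rfl | hy := eq_or_ne y l
  · rw [single_apply_self le_rfl, mul_one]
    split_ifs with hjy
    · rfl
    · exact single_apply_of_ne_right _ (Ne.symm hjy)
  · rw [single_apply_of_ne_right _ hy, mul_zero]
    split_ifs with hjl
    · exact (single_apply_of_ne_right _ (hjl ▸ hy)).symm
    · rfl

lemma single_mul_mul_single (i j : α) (a : IncidenceAlgebra 𝕜 α) :
    single 𝕜 i i * a * single 𝕜 j j = a i j • single 𝕜 i j := by
  ext x y hxy
  rw [mul_diag_apply (fun _ _ => single_self_apply_of_ne j),
    diag_mul_apply (fun _ _ => single_self_apply_of_ne i), constSMul_apply, smul_eq_mul]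
  obtain rfl | hx := eq_or_ne x i
  · obtain rfl | hy := eq_or_ne y j
    · rw [single_apply_self le_rfl, single_apply_self le_rfl, single_apply_self hxy,
        one_mul, mul_one]
    · rw [single_apply_of_ne_right _ hy, single_apply_of_ne_right _ hy, mul_zero, mul_zero]
  · rw [single_apply_of_ne_left _ hx, single_apply_of_ne_left _ hx, zero_mul, zero_mul,
      mul_zero]

lemma apply_eq_zero_of_commute_single {a : IncidenceAlgebra 𝕜 α} {i j : α}
    (h : a * single 𝕜 j j = single 𝕜 j j * a) (hij : i ≠ j) : a i j = 0 := by
  have := congr($h i j)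
  rwa [mul_diag_apply (fun _ _ => single_self_apply_of_ne j),
    diag_mul_apply (fun _ _ => single_self_apply_of_ne j), single_apply_self le_rfl, mul_one,
    single_apply_of_ne_left _ hij, zero_mul] at this

omit [LocallyFiniteOrder α] in
lemma eq_sum_single [Fintype α] (a : IncidenceAlgebra 𝕜 α) :
    a = ∑ p : α × α, a p.1 p.2 • single 𝕜 p.1 p.2 := by
  ext x y hxy
  rw [sum_apply, sum_eq_single_of_mem (x, y) (mem_univ _), constSMul_apply,
    single_apply_self hxy, smul_eq_mul, mul_one]
  rintro p - hp
  rw [constSMul_apply, single_apply, if_neg fun h => hp (Prod.ext h.1.symm h.2.1.symm),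
    smul_zero]

end Single

section Paths

variable [CommSemiring 𝕜] {n : ℕ}

section

variable [LE α]

noncomputable def pathWeight (a : Fin n → IncidenceAlgebra 𝕜 α) (c : Fin (n + 1) → α) :
    𝕜 :=
  ∏ t, a t (c t.castSucc) (c t.succ)

lemma pathWeight_update (a : Fin n → IncidenceAlgebra 𝕜 α) (i : Fin n) (v : IncidenceAlgebra 𝕜 α)
    (c : Fin (n + 1) → α) :
    pathWeight (update a i v) c =
      v (c i.castSucc) (c i.succ) * ∏ t ∈ univ \ {i}, a t (c t.castSucc) (c t.succ) := by
  rw [pathWeight, ← prod_update_of_mem (mem_univ i)]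
  exact prod_congr rfl fun t _ =>
    apply_update (fun t (w : IncidenceAlgebra 𝕜 α) => w (c t.castSucc) (c t.succ)) a i v t

lemma pathWeight_update_of_apply_eq_mul {a : Fin n → IncidenceAlgebra 𝕜 α} {i : Fin n}
    {v : IncidenceAlgebra 𝕜 α} {c : Fin (n + 1) → α} (s : 𝕜)
    (hv : v (c i.castSucc) (c i.succ) = s * a i (c i.castSucc) (c i.succ)) :
    pathWeight (update a i v) c = s * pathWeight a c := by
  rw [pathWeight_update, hv, mul_assoc, pathWeight,
    prod_eq_mul_prod_sdiff_singleton_of_mem (mem_univ i)]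

end

variable (𝕜) [Preorder α] [DecidableEq α]

noncomputable def singlesAlong (c : Fin (n + 1) → α) : Fin n → IncidenceAlgebra 𝕜 α :=
  fun t => single 𝕜 (c t.castSucc) (c t.succ)

variable {𝕜}

lemma singlesAlong_apply (c : Fin (n + 1) → α) (t : Fin n) :
    singlesAlong 𝕜 c t = single 𝕜 (c t.castSucc) (c t.succ) := rfl

lemma pathWeight_singlesAlong_self {c : Fin (n + 1) → α} (hc : Monotone c) :
    pathWeight (singlesAlong 𝕜 c) c = 1 :=
  prod_eq_one fun t _ => single_apply_self (hc (Fin.castSucc_le_succ t))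

lemma pathWeight_singlesAlong_eq_zero {c d : Fin (n + 1) → α} (h0 : d 0 = c 0) (hne : d ≠ c) :
    pathWeight (singlesAlong 𝕜 c) d = 0 := by
  obtain ⟨j, hj⟩ := Function.ne_iff.1 hne
  induction j using Fin.cases with
  | zero => exact absurd h0 hj
  | succ t => exact prod_eq_zero (mem_univ t) (single_apply_of_ne_right _ hj)

end Paths

end IncidenceAlgebra

namespace IsMultilin

variable {k : Type*} [Field k] {A : Type*} [Ring A] [Algebra k A] {n : ℕ}
  {F : (Fin n → A) → A}

lemma apply_update_zero (hF : IsMultilin k n F) (a : Fin n → A) (i : Fin n) :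
    F (update a i 0) = 0 := by
  simpa using hF a i 1 0 0

noncomputable def toMultilinearMap (hF : IsMultilin k n F) :
    MultilinearMap k (fun _ : Fin n => A) A where
  toFun := F
  map_update_add' := by
    intro _ a i x y
    obtain rfl := Subsingleton.elim ‹DecidableEq (Fin n)› (instDecidableEqFin n)
    simpa using hF a i 1 x y
  map_update_smul' := by
    intro _ a i c x
    obtain rfl := Subsingleton.elim ‹DecidableEq (Fin n)› (instDecidableEqFin n)
    simpa [hF.apply_update_zero] using hF a i c x 0

end IsMultilin

section IncidenceCochains

variable {k : Type*} [Field k] {P : Type*} [PartialOrder P] [LocallyFiniteOrder P]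
  [DecidableEq P] {n : ℕ}

lemma single_self_mem_diagSub (i : P) : single k i i ∈ diagSub k P :=
  fun _ _ => single_self_apply_of_ne i

lemma IsMultilin.apply_eq_sum_single [Fintype P]
    {F : (Fin n → IncidenceAlgebra k P) → IncidenceAlgebra k P} (hF : IsMultilin k n F)
    (a : Fin n → IncidenceAlgebra k P) :
    F a = ∑ r : Fin n → P × P,
      (∏ t, a t (r t).1 (r t).2) • F (fun t => single k (r t).1 (r t).2) := by
  calc F a = hF.toMultilinearMap fun t => ∑ p : P × P, a t p.1 p.2 • single k p.1 p.2 :=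
        congrArg F (funext fun t => eq_sum_single (a t))
    _ = _ := by simp only [MultilinearMap.map_sum, MultilinearMap.map_smul_univ]; rfl

lemma IsMultilin.apply_singlesAlong_of_not_monotone
    {F : (Fin n → IncidenceAlgebra k P) → IncidenceAlgebra k P} (hF : IsMultilin k n F)
    {c : Fin (n + 1) → P} (hc : ¬Monotone c) : F (singlesAlong k c) = 0 := by
  rw [Fin.monotone_iff_le_succ] at hc
  push Not at hc
  obtain ⟨t, ht⟩ := hc
  exact hF.toMultilinearMap.map_coord_zero t (single_eq_zero_of_not_le ht)

end IncidenceCochains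

lemma exists_tuple_of_composable {β : Type*} {n : ℕ} (hn : 0 < n) (r : Fin n → β × β)
    (hr : ∀ (t : ℕ) (ht : t + 1 < n), (r ⟨t, by omega⟩).2 = (r ⟨t + 1, ht⟩).1) :
    ∃ c : Fin (n + 1) → β, ∀ t, r t = (c t.castSucc, c t.succ) := by
  refine ⟨Fin.cons (r ⟨0, hn⟩).1 fun t => (r t).2, fun ⟨t, ht⟩ => Prod.ext ?_ rfl⟩
  cases t with
  | zero => rfl
  | succ t =>
    have hcs : (Fin.castSucc ⟨t + 1, ht⟩ : Fin (n + 1)) = Fin.succ ⟨t, by omega⟩ := rfl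
    rw [hcs, Fin.cons_succ]
    exact (hr t ht).symm

namespace IsRelCochain

variable {k : Type*} [Field k] {P : Type*} [PartialOrder P] [LocallyFiniteOrder P]
  [DecidableEq P] {n : ℕ} {F G : (Fin n → IncidenceAlgebra k P) → IncidenceAlgebra k P}

lemma apply_singlesAlong (hF : IsRelCochain k (diagSub k P : Set (IncidenceAlgebra k P)) n F)
    (hn : 0 < n) (c : Fin (n + 1) → P) :
    F (singlesAlong k c) =
      F (singlesAlong k c) (c 0) (c (Fin.last n)) • single k (c 0) (c (Fin.last n)) := by
  have h0 : (0 : Fin (n + 1)) = Fin.castSucc ⟨0, hn⟩ := rfl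
  have hlast : Fin.succ ⟨n - 1, by omega⟩ = Fin.last n :=
    Fin.ext (by simp only [Fin.val_succ, Fin.val_last]; omega)
  have hfirst : single k (c 0) (c 0) * singlesAlong k c ⟨0, hn⟩ = singlesAlong k c ⟨0, hn⟩ := by
    rw [singlesAlong_apply, single_self_mul_single, if_pos (congrArg c h0)]
  have hend : singlesAlong k c ⟨n - 1, by omega⟩ * single k (c (Fin.last n)) (c (Fin.last n)) =
      singlesAlong k c ⟨n - 1, by omega⟩ := by
    rw [singlesAlong_apply, single_mul_single_self, if_pos (congrArg c hlast)]
  have hleft := (hF.2 _ (single_self_mem_diagSub (c 0)) (singlesAlong k c)).1 hn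
  have hright := (hF.2 _ (single_self_mem_diagSub (c (Fin.last n))) (singlesAlong k c)).2.2 hn
  rw [hfirst, update_eq_self] at hleft
  rw [hend, update_eq_self] at hright
  rw [← single_mul_mul_single, ← hleft, ← hright]

lemma apply_single_eq_zero_of_ne
    (hF : IsRelCochain k (diagSub k P : Set (IncidenceAlgebra k P)) n F)
    (r : Fin n → P × P) (t : ℕ) (ht : t + 1 < n)
    (hr : (r ⟨t, by omega⟩).2 ≠ (r ⟨t + 1, ht⟩).1) :
    F (fun s => single k (r s).1 (r s).2) = 0 := by
  set a : Fin n → IncidenceAlgebra k P := fun s => single k (r s).1 (r s).2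
  set e := single k (r ⟨t, by omega⟩).2 (r ⟨t, by omega⟩).2
  have h := (hF.2 e (single_self_mem_diagSub _) a).2.1 t ht
  have hmul : a ⟨t, by omega⟩ * e = a ⟨t, by omega⟩ := by
    rw [single_mul_single_self, if_pos rfl]
  have hzero : e * a ⟨t + 1, ht⟩ = 0 := by
    rw [single_self_mul_single, if_neg hr]
  rw [hmul, update_eq_self, hzero] at h
  rw [h]
  exact hF.1.apply_update_zero a _

theorem eq_of_apply_singlesAlong [Fintype P] (hn : 0 < n)
    (hF : IsRelCochain k (diagSub k P : Set (IncidenceAlgebra k P)) n F)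
    (hG : IsRelCochain k (diagSub k P : Set (IncidenceAlgebra k P)) n G)
    (h : ∀ σ : SChain P n, F (singlesAlong k σ.1) (σ.1 0) (σ.1 (Fin.last n)) =
      G (singlesAlong k σ.1) (σ.1 0) (σ.1 (Fin.last n))) :
    F = G := by
  funext a
  rw [hF.1.apply_eq_sum_single, hG.1.apply_eq_sum_single]
  refine sum_congr rfl fun r _ => congrArg _ ?_
  by_cases hr : ∀ (t : ℕ) (ht : t + 1 < n), (r ⟨t, by omega⟩).2 = (r ⟨t + 1, ht⟩).1
  · obtain ⟨c, hc⟩ := exists_tuple_of_composable hn r hr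
    have hrc : (fun s => single k (r s).1 (r s).2) = singlesAlong k c :=
      funext fun s => by rw [hc s]; rfl
    rw [hrc]
    by_cases hmono : Monotone c
    · rw [hF.apply_singlesAlong hn, hG.apply_singlesAlong hn, h ⟨c, hmono⟩]
    · rw [hF.1.apply_singlesAlong_of_not_monotone hmono,
        hG.1.apply_singlesAlong_of_not_monotone hmono]
  · push Not at hr
    obtain ⟨t, ht, hne⟩ := hr
    rw [hF.apply_single_eq_zero_of_ne r t ht hne, hG.apply_single_eq_zero_of_ne r t ht hne]

end IsRelCochain

section Phi

variable {k : Type*} [Field k] {P : Type*} [PartialOrder P] [LocallyFiniteOrder P]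
  [DecidableEq P] {n : ℕ}

lemma mem_chainTuples_iff {x y : P} {c : Fin (n + 1) → P} :
    c ∈ chainTuples P n x y ↔ Monotone c ∧ c 0 = x ∧ c (Fin.last n) = y := by
  classical
  simp only [chainTuples, mem_filter, Fintype.mem_piFinset, mem_Icc, and_iff_right_iff_imp]
  rintro ⟨hc, rfl, rfl⟩ t
  exact ⟨hc (Fin.zero_le t), hc (Fin.le_last t)⟩

lemma Phi_apply (f : SChain P n → k) (a : Fin n → IncidenceAlgebra k P) (x y : P) :
    Phi k P n f a x y =
      ∑ c ∈ (chainTuples P n x y).attach, f ⟨c.1, chainTuples_mono P c.2⟩ * pathWeight a c.1 :=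
  rfl

lemma isMultilin_Phi (f : SChain P n → k) : IsMultilin k n (Phi k P n f) := by
  intro a i r v w
  ext x y _
  rw [IncidenceAlgebra.add_apply, constSMul_apply, smul_eq_mul, Phi_apply, Phi_apply, Phi_apply,
    mul_sum, ← sum_add_distrib]
  refine sum_congr rfl fun c _ => ?_
  rw [pathWeight_update, pathWeight_update, pathWeight_update, IncidenceAlgebra.add_apply,
    constSMul_apply, smul_eq_mul]
  ring

lemma Phi_update_first_diag_mul (f : SChain P n → k) {b : IncidenceAlgebra k P}
    (hb : ∀ i j, i ≠ j → b i j = 0) (a : Fin n → IncidenceAlgebra k P) (h0 : 0 < n) :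
    Phi k P n f (update a ⟨0, h0⟩ (b * a ⟨0, h0⟩)) = b * Phi k P n f a := by
  ext x y _
  rw [diag_mul_apply hb, Phi_apply, Phi_apply, mul_sum]
  refine sum_congr rfl fun c _ => ?_
  have hc : c.1 (Fin.castSucc ⟨0, h0⟩) = x := (mem_chainTuples_iff.1 c.2).2.1
  rw [pathWeight_update_of_apply_eq_mul (b x x) (by rw [diag_mul_apply hb, hc]), mul_left_comm]

lemma Phi_update_last_mul_diag (f : SChain P n → k) {b : IncidenceAlgebra k P}
    (hb : ∀ i j, i ≠ j → b i j = 0) (a : Fin n → IncidenceAlgebra k P) (h0 : 0 < n) :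
    Phi k P n f (update a ⟨n - 1, by omega⟩ (a ⟨n - 1, by omega⟩ * b)) =
      Phi k P n f a * b := by
  ext x y _
  rw [mul_diag_apply hb, Phi_apply, Phi_apply, sum_mul]
  refine sum_congr rfl fun c _ => ?_
  have hlast : (Fin.succ ⟨n - 1, by omega⟩ : Fin (n + 1)) = Fin.last n :=
    Fin.ext (by simp only [Fin.val_succ, Fin.val_last]; omega)
  have hc : c.1 (Fin.succ ⟨n - 1, by omega⟩) = y := hlast ▸ (mem_chainTuples_iff.1 c.2).2.2
  rw [pathWeight_update_of_apply_eq_mul (b y y) (by rw [mul_diag_apply hb, hc, mul_comm])]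
  ring

lemma Phi_update_mul_diag_eq_update_succ_diag_mul (f : SChain P n → k)
    {b : IncidenceAlgebra k P} (hb : ∀ i j, i ≠ j → b i j = 0)
    (a : Fin n → IncidenceAlgebra k P) (t : ℕ) (ht : t + 1 < n) :
    Phi k P n f (update a ⟨t, by omega⟩ (a ⟨t, by omega⟩ * b)) =
      Phi k P n f (update a ⟨t + 1, ht⟩ (b * a ⟨t + 1, ht⟩)) := by
  ext x y _
  rw [Phi_apply, Phi_apply]
  refine sum_congr rfl fun c _ => ?_
  have hcs : (Fin.castSucc ⟨t + 1, ht⟩ : Fin (n + 1)) = Fin.succ ⟨t, by omega⟩ := rfl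
  set z := c.1 (Fin.succ ⟨t, by omega⟩)
  rw [pathWeight_update_of_apply_eq_mul (b z z) (by rw [mul_diag_apply hb, mul_comm]),
    pathWeight_update_of_apply_eq_mul (b z z) (by rw [diag_mul_apply hb, hcs])]

lemma isRelCochain_Phi (f : SChain P n → k) :
    IsRelCochain k (diagSub k P : Set (IncidenceAlgebra k P)) n (Phi k P n f) :=
  ⟨isMultilin_Phi f, fun _ hb a =>
    ⟨Phi_update_first_diag_mul f hb a, Phi_update_mul_diag_eq_update_succ_diag_mul f hb a,
      Phi_update_last_mul_diag f hb a⟩⟩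

lemma Phi_smul_add (r : k) (f g : SChain P n → k) :
    Phi k P n (r • f + g) = fun a => r • Phi k P n f a + Phi k P n g a := by
  funext a
  ext x y _
  rw [IncidenceAlgebra.add_apply, constSMul_apply, smul_eq_mul, Phi_apply, Phi_apply, Phi_apply,
    mul_sum, ← sum_add_distrib]
  refine sum_congr rfl fun c _ => ?_
  rw [Pi.add_apply, Pi.smul_apply, smul_eq_mul]
  ring

lemma Phi_singlesAlong_apply (f : SChain P n → k) (σ : SChain P n) :
    Phi k P n f (singlesAlong k σ.1) (σ.1 0) (σ.1 (Fin.last n)) = f σ := by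
  rw [Phi_apply, sum_eq_single_of_mem ⟨σ.1, mem_chainTuples_iff.2 ⟨σ.2, rfl, rfl⟩⟩
    (mem_attach _ _), pathWeight_singlesAlong_self σ.2, mul_one]
  rintro c - hc
  rw [pathWeight_singlesAlong_eq_zero (mem_chainTuples_iff.1 c.2).2.1
    fun h => hc (Subtype.ext h), mul_zero]

lemma Phi_injective (n : ℕ) : Injective (Phi k P n) := fun f g h => funext fun σ => by
  rw [← Phi_singlesAlong_apply f σ, ← Phi_singlesAlong_apply g σ, h]

lemma Phi_zero_apply_of_ne (f : SChain P 0 → k) (a : Fin 0 → IncidenceAlgebra k P) {x y : P}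
    (hxy : x ≠ y) : Phi k P 0 f a x y = 0 :=
  sum_eq_zero fun c _ =>
    absurd ((mem_chainTuples_iff.1 c.2).2.1.symm.trans (mem_chainTuples_iff.1 c.2).2.2) hxy

lemma Phi_zero_apply_self (f : SChain P 0 → k) (a : Fin 0 → IncidenceAlgebra k P) (x : P) :
    Phi k P 0 f a x x = f ⟨fun _ => x, monotone_const⟩ := by
  rw [Subsingleton.elim a (singlesAlong k fun _ => x)]
  exact Phi_singlesAlong_apply f ⟨fun _ => x, monotone_const⟩

end Phi

theorem phi_linear_bijection_general
    (k : Type*) [Field k]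
    (P : Type*) [PartialOrder P] [Fintype P] [LocallyFiniteOrder P] [DecidableEq P] :
    -- `Φ` in positive degrees: a `k`-linear bijection onto the relative cochains
    (∀ n : ℕ, 1 ≤ n →
      (∀ f : SChain P n → k,
        IsRelCochain k (diagSub k P : Set (IncidenceAlgebra k P)) n (Phi k P n f)) ∧
      (∀ (c : k) (f g : SChain P n → k),
        Phi k P n (c • f + g) = fun a => c • Phi k P n f a + Phi k P n g a) ∧
      Function.Injective (Phi k P n) ∧
      (∀ F : (Fin n → IncidenceAlgebra k P) → IncidenceAlgebra k P,
        IsRelCochain k (diagSub k P : Set (IncidenceAlgebra k P)) n F →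
          ∃ f : SChain P n → k, Phi k P n f = F)) ∧
    -- `Φ` in degree 0: a `k`-linear bijection onto the centralizer of `S`
    ((∀ f : SChain P 0 → k, ∀ b ∈ diagSub k P,
        Phi k P 0 f Fin.elim0 * b = b * Phi k P 0 f Fin.elim0) ∧
      (∀ (c : k) (f g : SChain P 0 → k),
        Phi k P 0 (c • f + g) Fin.elim0 =
          c • Phi k P 0 f Fin.elim0 + Phi k P 0 g Fin.elim0) ∧
      Function.Injective (fun f : SChain P 0 → k => Phi k P 0 f Fin.elim0) ∧
      (∀ a : IncidenceAlgebra k P, (∀ b ∈ diagSub k P, a * b = b * a) →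
        ∃ f : SChain P 0 → k, Phi k P 0 f Fin.elim0 = a)) := by
  refine ⟨fun n hn => ⟨isRelCochain_Phi, Phi_smul_add, Phi_injective n, fun F hF => ?_⟩,
    fun f b hb => mul_comm_of_diag (fun _ _ => Phi_zero_apply_of_ne f _) hb,
    fun r f g => congrFun (Phi_smul_add r f g) _,
    fun f g h => Phi_injective 0 (funext fun a => Subsingleton.elim Fin.elim0 a ▸ h),
    fun a ha => ⟨fun σ => a (σ.1 0) (σ.1 0), ?_⟩⟩
  · refine ⟨fun σ => F (singlesAlong k σ.1) (σ.1 0) (σ.1 (Fin.last n)), ?_⟩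
    exact (isRelCochain_Phi _).eq_of_apply_singlesAlong hn hF fun σ => Phi_singlesAlong_apply _ σ
  · ext x y _
    obtain rfl | hxy := eq_or_ne x y
    · exact Phi_zero_apply_self _ _ x
    · rw [Phi_zero_apply_of_ne _ _ hxy,
        apply_eq_zero_of_commute_single (ha _ (single_self_mem_diagSub y)) hxy]

theorem phi_linear_bijection
    (k : Type*) [Field k] [CharZero k]
    (P : Type*) [PartialOrder P] [Fintype P] [LocallyFiniteOrder P] [DecidableEq P] :
    -- `Φ` in positive degrees: a `k`-linear bijection onto the relative cochains
    (∀ n : ℕ, 1 ≤ n →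
      (∀ f : SChain P n → k,
        IsRelCochain k (diagSub k P : Set (IncidenceAlgebra k P)) n (Phi k P n f)) ∧
      (∀ (c : k) (f g : SChain P n → k),
        Phi k P n (c • f + g) = fun a => c • Phi k P n f a + Phi k P n g a) ∧
      Function.Injective (Phi k P n) ∧
      (∀ F : (Fin n → IncidenceAlgebra k P) → IncidenceAlgebra k P,
        IsRelCochain k (diagSub k P : Set (IncidenceAlgebra k P)) n F →
          ∃ f : SChain P n → k, Phi k P n f = F)) ∧
    -- `Φ` in degree 0: a `k`-linear bijection onto the centralizer of `S`
    ((∀ f : SChain P 0 → k, ∀ b ∈ diagSub k P,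
        Phi k P 0 f Fin.elim0 * b = b * Phi k P 0 f Fin.elim0) ∧
      (∀ (c : k) (f g : SChain P 0 → k),
        Phi k P 0 (c • f + g) Fin.elim0 =
          c • Phi k P 0 f Fin.elim0 + Phi k P 0 g Fin.elim0) ∧
      Function.Injective (fun f : SChain P 0 → k => Phi k P 0 f Fin.elim0) ∧
      (∀ a : IncidenceAlgebra k P, (∀ b ∈ diagSub k P, a * b = b * a) →
        ∃ f : SChain P 0 → k, Phi k P 0 f Fin.elim0 = a)) :=
  phi_linear_bijection_general k P
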